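/- arXiv:2309.13284 — 2 statements merged into one kernel-verified Lean document; each statement's English description precedes it below -/
import Mathlib

section
/- Let n ≥ 2 be a positive integer and R = F_1 × ⋯ × F_n, where each F_i is a field. Then the maximum cardinality of a set S of non-trivial ideals of R such that no two distinct members of S are mutually maximally distant in G(R) equals 2^{n-1} − 1; that is, the independence number of the strong resolving graph satisfies β(G(R)_SR) = 2^{n-1} − 1. -/
open SimpleGraph

/-- The type of non-trivial ideals of a commutative ring `R`
(ideals `I` with `I ≠ 0` and `I ≠ R`). -/
abbrev NontrivialIdeal (R : Type*) [CommRing R] : Type _ :=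
  {I : Ideal R // I ≠ ⊥ ∧ I ≠ ⊤}

/-- The intersection graph of ideals of `R`: vertices are the non-trivial ideals,
and distinct vertices are adjacent iff their intersection is non-zero. -/
def intersectionGraph (R : Type*) [CommRing R] : SimpleGraph (NontrivialIdeal R) where
  Adj I J := I ≠ J ∧ I.1 ⊓ J.1 ≠ ⊥
  symm := ⟨fun I J h => ⟨h.1.symm, by rw [inf_comm]; exact h.2⟩⟩
  loopless := ⟨fun I h => h.1 rfl⟩

/-- Two distinct vertices `u, v` are mutually maximally distant if
`d(v,w) ≤ d(u,v)` for every neighbour `w` of `u` and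
`d(u,w) ≤ d(u,v)` for every neighbour `w` of `v`. -/
def MutuallyMaximallyDistant {V : Type*} (G : SimpleGraph V) (u v : V) : Prop :=
  u ≠ v ∧ (∀ w, G.Adj u w → G.edist v w ≤ G.edist u v) ∧
    (∀ w, G.Adj v w → G.edist u w ≤ G.edist u v)

theorem MutuallyMaximallyDistant.symm {V : Type*} {G : SimpleGraph V} {u v : V}
    (h : MutuallyMaximallyDistant G u v) : MutuallyMaximallyDistant G v u :=
  ⟨h.1.symm,
    fun w hw => by rw [show G.edist v u = G.edist u v from G.edist_comm]; exact h.2.2 w hw,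
    fun w hw => by rw [show G.edist v u = G.edist u v from G.edist_comm]; exact h.2.1 w hw⟩

/-- The strong resolving graph of `G`: `u` and `v` are adjacent iff they are
mutually maximally distant. -/
def strongResolvingGraph {V : Type*} (G : SimpleGraph V) : SimpleGraph V where
  Adj := MutuallyMaximallyDistant G
  symm := ⟨fun _ _ h => h.symm⟩
  loopless := ⟨fun _ h => h.1 rfl⟩

/-- A vertex `w` strongly resolves `u` and `v` if `d(w,u) = d(w,v) + d(v,u)` or
`d(w,v) = d(w,u) + d(u,v)`. A set `W` is a strong resolving set if every two distinct
vertices are strongly resolved by some member of `W`. -/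
def IsStrongResolvingSet {V : Type*} (G : SimpleGraph V) (W : Set V) : Prop :=
  ∀ u v : V, u ≠ v → ∃ w ∈ W,
    G.edist w u = G.edist w v + G.edist v u ∨ G.edist w v = G.edist w u + G.edist u v

/-- The product ideal which is `Rᵢ` in the components where `I` is zero and `0` elsewhere. -/
def complIdeal {ι : Type*} (F : ι → Type*) [∀ i, CommRing (F i)] (I : Ideal (∀ i, F i)) :
    Ideal (∀ i, F i) where
  carrier := {x | ∀ i, I.map (Pi.evalRingHom F i) ≠ ⊥ → x i = 0}
  zero_mem' := fun i _ => rfl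
  add_mem' := fun hx hy i hi => by
    simp only [Pi.add_apply, hx i hi, hy i hi, add_zero]
  smul_mem' := fun c x hx i hi => by
    simp only [Pi.smul_apply, smul_eq_mul, Pi.mul_apply, hx i hi, mul_zero]

/-!
An ideal of a finite product of fields is determined by the set of coordinates at which it
is nonzero, so `G(R)` is the graph on the elements `≠ ⊥, ⊤` of the Boolean algebra
`Fin n → Bool`, two of them adjacent when they meet. In any Boolean algebra, two such elements
are mutually maximally distant exactly when they are disjoint: disjoint `a, b` are at distance
`≥ 2`, while every neighbour of `a` is within distance `2` of `b`; and if `a` meets `b` without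
lying below it, then `bᶜ` is a neighbour of `a` at distance `≥ 2` from `b`. So `G_SR` is the
complement of `G`, its independent sets are the intersecting families of elements `≠ ⊥, ⊤`,
and such a family together with `⊤` is intersecting, hence has at most half as many elements
as the algebra. The elements above an atom, other than `⊤`, attain the bound.
-/

namespace SimpleGraph

variable {V W : Type*} {G : SimpleGraph V} {H : SimpleGraph W} {u v : V}

theorem Hom.edist_map_le (f : G →g H) (u v : V) : H.edist (f u) (f v) ≤ G.edist u v := by
  rcases eq_or_ne (G.edist u v) ⊤ with h | h
  · simp [h]
  · obtain ⟨p, hp⟩ := exists_walk_of_edist_ne_top h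
    rw [← hp, ← p.length_map f]
    exact edist_le _

theorem Iso.edist_map (e : G ≃g H) (u v : V) : H.edist (e u) (e v) = G.edist u v :=
  le_antisymm (e.toHom.edist_map_le u v) (by simpa using e.symm.toHom.edist_map_le (e u) (e v))

theorem Iso.mutuallyMaximallyDistant_iff (e : G ≃g H) :
    MutuallyMaximallyDistant H (e u) (e v) ↔ MutuallyMaximallyDistant G u v := by
  simp only [MutuallyMaximallyDistant, e.surjective.forall, e.map_adj_iff, e.edist_map,
    e.injective.ne_iff]

def Iso.strongResolvingGraph (e : G ≃g H) :
    strongResolvingGraph G ≃g strongResolvingGraph H :=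
  ⟨e.toEquiv, e.mutuallyMaximallyDistant_iff⟩

theorem two_le_edist (hne : u ≠ v) (hnadj : ¬G.Adj u v) : 2 ≤ G.edist u v := by
  rw [← one_add_one_eq_two]
  refine Order.add_one_le_of_lt (not_le.mp ?_)
  rw [edist_le_one_iff_adj_or_eq]
  tauto

def indepSetSizes (G : SimpleGraph V) : Set ℕ :=
  {k | ∃ S : Set V, S.Finite ∧ G.IsIndepSet S ∧ S.ncard = k}

theorem Iso.indepSetSizes_subset (e : G ≃g H) : G.indepSetSizes ⊆ H.indepSetSizes := by
  rintro _ ⟨S, hfin, hS, rfl⟩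
  refine ⟨e '' S, hfin.image e, ?_, Set.ncard_image_of_injective S e.injective⟩
  rintro _ ⟨x, hx, rfl⟩ _ ⟨y, hy, rfl⟩ hxy
  rw [e.map_adj_iff]
  exact hS hx hy (ne_of_apply_ne e hxy)

theorem Iso.indepSetSizes_eq (e : G ≃g H) : G.indepSetSizes = H.indepSetSizes :=
  e.indepSetSizes_subset.antisymm e.symm.indepSetSizes_subset

end SimpleGraph

def OrderIso.piCongrRight {ι : Type*} {α β : ι → Type*} [∀ i, LE (α i)] [∀ i, LE (β i)]
    (e : ∀ i, α i ≃o β i) : (∀ i, α i) ≃o ∀ i, β i where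
  toEquiv := Equiv.piCongrRight fun i => (e i).toEquiv
  map_rel_iff' := by simp [Pi.le_def]

open Classical in
noncomputable def Ideal.piFieldOrderIso {ι : Type*} [Finite ι] (F : ι → Type*)
    [∀ i, Field (F i)] : Ideal (∀ i, F i) ≃o (ι → Bool) :=
  Ideal.piOrderIso.trans (OrderIso.piCongrRight fun _ => IsSimpleOrder.orderIsoBool)

def meetGraph (L : Type*) [Lattice L] [BoundedOrder L] :
    SimpleGraph {a : L // a ≠ ⊥ ∧ a ≠ ⊤} where
  Adj a b := a ≠ b ∧ a.1 ⊓ b.1 ≠ ⊥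
  symm := ⟨fun _ _ h => ⟨h.1.symm, by rw [inf_comm]; exact h.2⟩⟩
  loopless := ⟨fun _ h => h.1 rfl⟩

theorem intersectionGraph_eq_meetGraph (R : Type*) [CommRing R] :
    intersectionGraph R = meetGraph (Ideal R) := rfl

section meetGraph

variable {L M : Type*} [Lattice L] [BoundedOrder L] [Lattice M] [BoundedOrder M]

theorem meetGraph_adj {a b : {a : L // a ≠ ⊥ ∧ a ≠ ⊤}} :
    (meetGraph L).Adj a b ↔ a ≠ b ∧ ¬Disjoint a.1 b.1 := by
  rw [disjoint_iff]; rfl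

def OrderIso.meetGraphIso (e : L ≃o M) : meetGraph L ≃g meetGraph M where
  toEquiv := e.toEquiv.subtypeEquiv fun a => by simp
  map_rel_iff' {a b} :=
    and_congr (Equiv.injective _).ne_iff (by
      simp only [Equiv.subtypeEquiv_apply, OrderIso.coe_toEquiv, ← e.map_inf]
      exact not_congr (e.injective.eq_iff' e.map_bot))

end meetGraph

section BooleanAlgebra

variable {α : Type*} [BooleanAlgebra α]

theorem not_mutuallyMaximallyDistant_meetGraph_of_adj {a b : {a : α // a ≠ ⊥ ∧ a ≠ ⊤}}
    (h : (meetGraph α).Adj a b) : ¬MutuallyMaximallyDistant (meetGraph α) a b := by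
  wlog hab : ¬a.1 ≤ b.1 generalizing a b
  · have hba : ¬b.1 ≤ a.1 := fun hba => h.1 (Subtype.ext (le_antisymm (not_not.mp hab) hba))
    exact fun hmmd => this h.symm hba hmmd.symm
  rintro ⟨-, hfar, -⟩
  let w : {a : α // a ≠ ⊥ ∧ a ≠ ⊤} :=
    ⟨b.1ᶜ, compl_eq_bot.not.mpr b.2.2, compl_eq_top.not.mpr b.2.1⟩
  have haw : (meetGraph α).Adj a w := by
    refine meetGraph_adj.mpr ⟨fun haw => h.2 ?_, by rwa [disjoint_compl_right_iff]⟩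
    rw [haw, compl_inf_self]
  have hbw : ¬((meetGraph α).Adj b w ∨ b = w) := by
    rintro (hbw | hbw)
    · exact hbw.2 (inf_compl_self _)
    · refine b.2.1 ?_
      rw [← inf_idem b.1]
      nth_rewrite 2 [hbw]
      exact inf_compl_self _
  have := hfar w haw
  rw [edist_eq_one_iff_adj.mpr h] at this
  exact hbw (edist_le_one_iff_adj_or_eq.mp this)

theorem edist_meetGraph_le_of_disjoint {a b w : {a : α // a ≠ ⊥ ∧ a ≠ ⊤}} (hab : a ≠ b)
    (hd : Disjoint a.1 b.1) (haw : (meetGraph α).Adj a w) :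
    (meetGraph α).edist b w ≤ (meetGraph α).edist a b := by
  refine le_trans ?_ (two_le_edist hab fun h => (meetGraph_adj.mp h).2 hd)
  by_cases hbw : (meetGraph α).Adj b w ∨ b = w
  · exact (edist_le_one_iff_adj_or_eq.mpr hbw).trans one_le_two
  have hbw : Disjoint b.1 w.1 := by
    rw [meetGraph_adj, not_or] at hbw
    exact not_not.mp (not_and.mp hbw.1 hbw.2)
  obtain ⟨haw_ne, haw⟩ := meetGraph_adj.mp haw
  -- `b ⊔ (a ⊓ w)` is a common neighbour of `b` and `w`
  have hc_top : b.1 ⊔ (a.1 ⊓ w.1) ≠ ⊤ := by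
    intro hc
    have ha : a.1 ≤ w.1 := (hd.left_le_of_le_sup_left (hc ▸ le_top)).trans inf_le_right
    have hw : w.1 ≤ a.1 := (hbw.symm.left_le_of_le_sup_left (hc ▸ le_top)).trans inf_le_left
    exact haw_ne (Subtype.ext (le_antisymm ha hw))
  let c : {a : α // a ≠ ⊥ ∧ a ≠ ⊤} :=
    ⟨b.1 ⊔ (a.1 ⊓ w.1), ne_bot_of_le_ne_bot b.2.1 le_sup_left, hc_top⟩
  have hbc : (meetGraph α).Adj b c := by
    refine meetGraph_adj.mpr ⟨fun hbc => haw ?_, fun h => b.2.1 (h.eq_bot_of_le le_sup_left)⟩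
    rw [disjoint_iff]
    exact (hd.mono_left inf_le_left).eq_bot_of_le
      (le_sup_right.trans (congrArg Subtype.val hbc).ge)
  have hcw : (meetGraph α).Adj c w := by
    refine meetGraph_adj.mpr ⟨fun hcw => b.2.1 (hbw.eq_bot_of_le ?_), fun h => haw ?_⟩
    · exact le_sup_left.trans (congrArg Subtype.val hcw).le
    · rw [disjoint_iff]
      exact (h.mono_left le_sup_right).eq_bot_of_le inf_le_right
  calc (meetGraph α).edist b w ≤ (meetGraph α).edist b c + (meetGraph α).edist c w :=
        (meetGraph α).edist_triangle
    _ = 2 := by rw [edist_eq_one_iff_adj.mpr hbc, edist_eq_one_iff_adj.mpr hcw, one_add_one_eq_two]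

theorem mutuallyMaximallyDistant_meetGraph_of_disjoint {a b : {a : α // a ≠ ⊥ ∧ a ≠ ⊤}}
    (hab : a ≠ b) (hd : Disjoint a.1 b.1) : MutuallyMaximallyDistant (meetGraph α) a b :=
  ⟨hab, fun _ hw => edist_meetGraph_le_of_disjoint hab hd hw,
    fun _ hw => (edist_meetGraph_le_of_disjoint hab.symm hd.symm hw).trans_eq edist_comm⟩

theorem strongResolvingGraph_meetGraph :
    strongResolvingGraph (meetGraph α) = (meetGraph α)ᶜ := by
  ext a b
  rw [compl_adj]
  refine ⟨fun h => ⟨h.1, fun hadj => not_mutuallyMaximallyDistant_meetGraph_of_adj hadj h⟩,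
    fun ⟨hab, hna⟩ => mutuallyMaximallyDistant_meetGraph_of_disjoint hab ?_⟩
  simpa [meetGraph_adj, hab] using hna

end BooleanAlgebra

theorem IsAtom.two_mul_ncard_Ici {α : Type*} [BooleanAlgebra α] [Finite α] {p : α}
    (hp : IsAtom p) : 2 * (Set.Ici p).ncard = Nat.card α := by
  have himage : compl '' Set.Ici p = (Set.Ici p)ᶜ := by
    ext a
    rw [Set.image_eq_preimage_of_inverse compl_compl compl_compl]
    simp [le_compl_iff_disjoint_right, ← hp.not_le_iff_disjoint]
  rw [two_mul]
  nth_rewrite 2 [← Set.ncard_image_of_injective _ compl_injective]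
  rw [himage, Set.ncard_add_ncard_compl]

theorem isGreatest_indepSetSizes_compl_meetGraph {α : Type*} [BooleanAlgebra α] [Fintype α]
    [Nontrivial α] : IsGreatest (meetGraph α)ᶜ.indepSetSizes (Fintype.card α / 2 - 1) := by
  constructor
  · obtain ⟨p, hp⟩ := IsAtomic.exists_atom α
    refine ⟨{x | p ≤ x.1}, Set.toFinite _, ?_, ?_⟩
    · rw [isIndepSet_compl]
      exact fun x hx y hy hxy => ⟨hxy, ne_bot_of_le_ne_bot hp.1 (le_inf hx hy)⟩
    · have himage : Subtype.val '' {x : {a : α // a ≠ ⊥ ∧ a ≠ ⊤} | p ≤ x.1} =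
          Set.Ici p \ {⊤} := by
        ext a
        simpa using fun (hpa : p ≤ a) _ => ne_bot_of_le_ne_bot hp.1 hpa
      have := hp.two_mul_ncard_Ici
      rw [← Set.ncard_image_of_injective _ Subtype.val_injective, himage,
        Set.ncard_sdiff_singleton_of_mem (Set.mem_Ici.mpr le_top)]
      rw [Nat.card_eq_fintype_card] at this
      omega
  · classical
    rintro _ ⟨S, -, hS, rfl⟩
    rw [isIndepSet_compl] at hS
    have hT : (insert ⊤ (Subtype.val '' S)).Intersecting := by
      refine Set.Intersecting.insert ?_ top_ne_bot ?_
      · rintro _ ⟨x, hx, rfl⟩ _ ⟨y, hy, rfl⟩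
        obtain rfl | hxy := eq_or_ne x y
        · exact disjoint_self.not.mpr x.2.1
        · exact (meetGraph_adj.mp (hS hx hy hxy)).2
      · rintro _ ⟨x, -, rfl⟩
        exact top_disjoint.not.mpr x.2.1
    have htop : ⊤ ∉ Subtype.val '' S := fun ⟨x, _, hx⟩ => x.2.2 hx
    have := Set.Intersecting.card_le (s := (insert ⊤ (Subtype.val '' S)).toFinset)
      (by simpa using hT)
    rw [← Set.ncard_eq_toFinset_card', Set.ncard_insert_of_notMem htop,
      Set.ncard_image_of_injective _ Subtype.val_injective] at this
    omega

theorem statement4 (n : ℕ) (hn : 2 ≤ n) (F : Fin n → Type*) [∀ i, Field (F i)] :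
    IsGreatest {k : ℕ | ∃ S : Set (NontrivialIdeal (∀ i, F i)), S.Finite ∧
        (∀ I ∈ S, ∀ J ∈ S, I ≠ J →
          ¬ MutuallyMaximallyDistant (intersectionGraph (∀ i, F i)) I J) ∧
        S.ncard = k} (2 ^ (n - 1) - 1) := by
  have : Nonempty (Fin n) := ⟨⟨0, by omega⟩⟩
  have hcard : Fintype.card (Fin n → Bool) / 2 = 2 ^ (n - 1) := by
    rw [Fintype.card_fun, Fintype.card_bool, Fintype.card_fin, ← Nat.pow_div (by omega) two_pos,
      pow_one]
  show IsGreatest (strongResolvingGraph (intersectionGraph (∀ i, F i))).indepSetSizes _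
  rw [intersectionGraph_eq_meetGraph,
    (Ideal.piFieldOrderIso F).meetGraphIso.strongResolvingGraph.indepSetSizes_eq,
    strongResolvingGraph_meetGraph, ← hcard]
  exact isGreatest_indepSetSizes_compl_meetGraph
end

section
/- Let m ≥ 2 be a positive integer and R = R_1 × ⋯ × R_m, where each R_i is a commutative Artinian local principal ideal ring that is not a field with exactly n_i non-trivial ideals. Then the strong metric dimension of G(R) equals ∏_{i=1}^m (n_i + 2) − 2^{m-1} − 2; that is, the minimum cardinality of a strong resolving set of G(R) is ∏_{i=1}^m (n_i + 2) − 2^{m-1} − 2. -/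
open SimpleGraph

/-!
Ideals of `Π i, Rᵢ` are tuples of ideals, and the ideals of a local principal ideal ring form a
chain, so two non-trivial ideals are adjacent exactly when their supports `{i | Iᵢ ≠ 0}` meet.
The ideal whose components are all maximal ideals is adjacent to every other vertex, so the graph
has diameter at most two. In such a graph `W` is strongly resolving iff any two vertices outside
`W` are adjacent with different closed neighbourhoods; here this says that their supports meet
and differ. So taking supports embeds the complement of a strong resolving set into an
intersecting family of subsets of the index set, which has at most `2 ^ (m - 1)` members, and
the family of all subsets containing a fixed index is realised by such a complement.
-/

theorem Set.Intersecting.two_mul_ncard_le {α : Type*} [BooleanAlgebra α] [Finite α] {s : Set α}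
    (hs : s.Intersecting) : 2 * s.ncard ≤ Nat.card α := by
  classical
  have := Fintype.ofFinite α
  rw [Set.ncard_eq_toFinset_card', Nat.card_eq_fintype_card]
  exact Set.Intersecting.card_le (by rwa [Set.coe_toFinset])

theorem Nat.card_set (α : Type*) [Finite α] : Nat.card (Set α) = 2 ^ Nat.card α := by
  have := Fintype.ofFinite α
  rw [Nat.card_eq_fintype_card, Fintype.card_set, Nat.card_eq_fintype_card]

theorem Set.two_mul_ncard_setOf_mem {ι : Type*} [Finite ι] (z : ι) :
    2 * {T : Set ι | z ∈ T}.ncard = 2 ^ Nat.card ι := by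
  have hcompl : {T : Set ι | z ∈ T}ᶜ = compl '' {T : Set ι | z ∈ T} := by
    rw [compl_involutive.image_eq_preimage_symm]; rfl
  have := Set.ncard_add_ncard_compl {T : Set ι | z ∈ T}
  rw [hcompl, compl_injective.injOn.ncard_image, Nat.card_set] at this
  omega

theorem ncard_setOf_ne_bot_ne_top_add_two {α : Type*} [PartialOrder α] [BoundedOrder α]
    [Nontrivial α] [Finite α] : {a : α | a ≠ ⊥ ∧ a ≠ ⊤}.ncard + 2 = Nat.card α := by
  have : {a : α | a ≠ ⊥ ∧ a ≠ ⊤} = {⊥, ⊤}ᶜ := by ext; simp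
  rw [this, ← Set.ncard_pair (bot_ne_top : (⊥ : α) ≠ ⊤), add_comm,
    Set.ncard_add_ncard_compl]

theorem card_nontrivialIdeal_add_two (A : Type*) [CommRing A] [Nontrivial A]
    [Finite (Ideal A)] : Nat.card (NontrivialIdeal A) + 2 = Nat.card (Ideal A) := by
  rw [← ncard_setOf_ne_bot_ne_top_add_two (α := Ideal A)]
  exact congrArg (· + 2) (Nat.card_coe_set_eq {I : Ideal A | I ≠ ⊥ ∧ I ≠ ⊤})

theorem finite_of_finite_setOf_ne_bot_ne_top {α : Type*} [LE α] [BoundedOrder α]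
    (h : {a : α | a ≠ ⊥ ∧ a ≠ ⊤}.Finite) : Finite α := by
  refine Set.finite_univ_iff.mp (((h.insert ⊤).insert ⊥).subset fun a _ => ?_)
  by_cases ha : a = ⊥
  · exact .inl ha
  by_cases ha' : a = ⊤
  · exact .inr (.inl ha')
  · exact .inr (.inr ⟨ha, ha'⟩)

theorem PreValuationRing.of_isLocalRing_of_isBezout (A : Type*) [CommRing A] [IsLocalRing A]
    [IsBezout A] : PreValuationRing A := by
  refine PreValuationRing.iff_dvd_total.mpr ⟨fun a b => ?_⟩
  obtain ⟨g, hg⟩ := IsBezout.span_pair_isPrincipal a b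
  rw [Ideal.submodule_span_eq] at hg
  have hmem : ∀ c ∈ ({a, b} : Set A), ∃ c', c' * g = c := fun c hc =>
    Ideal.mem_span_singleton'.mp (hg ▸ Ideal.subset_span hc)
  obtain ⟨a', rfl⟩ := hmem a (by simp)
  obtain ⟨b', rfl⟩ := hmem b (by simp)
  obtain ⟨x, y, hxy⟩ := Ideal.mem_span_pair.mp (hg ▸ Ideal.mem_span_singleton_self g)
  have hfix : (1 - (x * a' + y * b')) * g = 0 := by linear_combination -hxy
  rcases IsLocalRing.isUnit_or_isUnit_one_sub_self (x * a' + y * b') with hu | hu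
  · rcases IsLocalRing.isUnit_or_isUnit_of_isUnit_add hu with ha | hb
    · exact .inl (mul_dvd_mul_right (isUnit_of_mul_isUnit_right ha).dvd g)
    · exact .inr (mul_dvd_mul_right (isUnit_of_mul_isUnit_right hb).dvd g)
  · simp [(hu.mul_right_eq_zero).mp hfix]

theorem Ideal.inf_ne_bot_of_preValuationRing {A : Type*} [CommRing A] [PreValuationRing A]
    {I J : Ideal A} (hI : I ≠ ⊥) (hJ : J ≠ ⊥) : I ⊓ J ≠ ⊥ := by
  rcases (PreValuationRing.iff_ideal_total.mp ‹_›).total I J with h | h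
  · rwa [inf_eq_left.mpr h]
  · rwa [inf_eq_right.mpr h]

namespace Ideal

variable {ι : Type*} {R : ι → Type*} [∀ i, CommRing (R i)]

def piSupport (I : Ideal (Π i, R i)) : Set ι := {i | I.map (Pi.evalRingHom R i) ≠ ⊥}

theorem piSupport_pi (J : Π i, Ideal (R i)) : (Ideal.pi J).piSupport = {i | J i ≠ ⊥} := by
  simp only [piSupport, map_evalRingHom_pi]

theorem piSupport_bot : (⊥ : Ideal (Π i, R i)).piSupport = ∅ := by
  simp [piSupport, map_bot]

theorem piSupport_eq_empty_iff [Finite ι] {I : Ideal (Π i, R i)} :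
    I.piSupport = ∅ ↔ I = ⊥ := by
  rw [← piOrderIso.injective.eq_iff, OrderIso.map_bot, funext_iff, Set.eq_empty_iff_forall_notMem]
  simp only [piSupport, Set.mem_ofPred_eq, not_not]
  rfl

theorem piSupport_nonempty [Finite ι] {I : Ideal (Π i, R i)} (hI : I ≠ ⊥) :
    I.piSupport.Nonempty :=
  Set.nonempty_iff_ne_empty.mpr fun h => hI (piSupport_eq_empty_iff.mp h)

theorem piSupport_inf [Finite ι] [∀ i, PreValuationRing (R i)] (I J : Ideal (Π i, R i)) :
    (I ⊓ J).piSupport = I.piSupport ∩ J.piSupport := by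
  ext i
  change piOrderIso (I ⊓ J) i ≠ ⊥ ↔ piOrderIso I i ≠ ⊥ ∧ piOrderIso J i ≠ ⊥
  rw [OrderIso.map_inf, Pi.inf_apply]
  exact ⟨fun h => ⟨ne_bot_of_le_ne_bot h inf_le_left, ne_bot_of_le_ne_bot h inf_le_right⟩,
    fun h => inf_ne_bot_of_preValuationRing h.1 h.2⟩

theorem inf_ne_bot_iff_piSupport [Finite ι] [∀ i, PreValuationRing (R i)]
    {I J : Ideal (Π i, R i)} : I ⊓ J ≠ ⊥ ↔ (I.piSupport ∩ J.piSupport).Nonempty := by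
  rw [← piSupport_inf, Ne, ← piSupport_eq_empty_iff, Set.nonempty_iff_ne_empty]

section Local

variable [∀ i, IsLocalRing (R i)]

open scoped Classical in
noncomputable def piMaximalOn (T : Set ι) : Ideal (Π i, R i) :=
  Ideal.pi fun i => if i ∈ T then IsLocalRing.maximalIdeal (R i) else ⊥

theorem piSupport_piMaximalOn (hnf : ∀ i, ¬IsField (R i)) (T : Set ι) :
    (piMaximalOn (R := R) T).piSupport = T := by
  ext i
  have := (IsLocalRing.isField_iff_maximalIdeal_eq (R := R i)).not.mp (hnf i)
  by_cases hi : i ∈ T <;> simp [piMaximalOn, piSupport_pi, hi, this]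

theorem piMaximalOn_ne_top {T : Set ι} (hT : T.Nonempty) : piMaximalOn (R := R) T ≠ ⊤ := by
  obtain ⟨i, hi⟩ := hT
  intro h
  have := congrArg (map (Pi.evalRingHom R i)) h
  rw [piMaximalOn, map_evalRingHom_pi, map_top, if_pos hi] at this
  exact IsLocalRing.maximalIdeal.isMaximal _ |>.ne_top this

theorem piMaximalOn_ne_bot (hnf : ∀ i, ¬IsField (R i)) {T : Set ι} (hT : T.Nonempty) :
    piMaximalOn (R := R) T ≠ ⊥ := by
  intro h
  have := piSupport_piMaximalOn hnf T
  rw [h, piSupport_bot] at this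
  exact hT.ne_empty this.symm

end Local

end Ideal

namespace SimpleGraph

variable {V : Type*} {G : SimpleGraph V}

def closedNeighborSet (G : SimpleGraph V) (v : V) : Set V := insert v (G.neighborSet v)

@[simp]
theorem mem_closedNeighborSet {v w : V} : w ∈ G.closedNeighborSet v ↔ w = v ∨ G.Adj v w :=
  Iff.rfl

theorem edist_le_two_of_forall_adj {c : V} (hc : ∀ v, v ≠ c → G.Adj c v) (u v : V) :
    G.edist u v ≤ 2 := by
  have hle : ∀ w, G.edist c w ≤ 1 := fun w => by
    rcases eq_or_ne w c with rfl | hw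
    · simp
    · exact (edist_eq_one_iff_adj.mpr (hc w hw)).le
  calc G.edist u v ≤ G.edist u c + G.edist c v := SimpleGraph.edist_triangle
    _ ≤ 1 + 1 := add_le_add (edist_comm ▸ hle u) (hle v)
    _ = 2 := one_add_one_eq_two

open scoped Classical in
theorem edist_eq_ite_of_edist_le_two (hG : ∀ u v, G.edist u v ≤ 2) {u v : V} (huv : u ≠ v) :
    G.edist u v = if G.Adj u v then 1 else 2 := by
  split_ifs with h
  · exact edist_eq_one_iff_adj.mpr h
  obtain ⟨n, hn⟩ := ENat.ne_top_iff_exists.mp (ne_top_of_le_ne_top (by decide) (hG u v))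
  have h0 : n ≠ 0 := by rintro rfl; exact huv (edist_eq_zero_iff.mp hn.symm)
  have h1 : n ≠ 1 := by rintro rfl; exact h (edist_eq_one_iff_adj.mp hn.symm)
  have h2 : n ≤ 2 := by exact_mod_cast hn ▸ hG u v
  rw [← hn]
  exact_mod_cast (by omega : n = 2)

theorem edist_eq_add_iff_of_edist_le_two (hG : ∀ u v, G.edist u v ≤ 2) {u v w : V}
    (huv : u ≠ v) (hwu : w ≠ u) (hwv : w ≠ v) :
    G.edist w u = G.edist w v + G.edist v u ↔ G.Adj w v ∧ G.Adj v u ∧ ¬G.Adj w u := by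
  classical
  rw [edist_eq_ite_of_edist_le_two hG hwu, edist_eq_ite_of_edist_le_two hG hwv,
    edist_eq_ite_of_edist_le_two hG huv.symm]
  split_ifs <;> simp_all <;> decide

end SimpleGraph

theorem isStrongResolvingSet_iff_of_edist_le_two {V : Type*} {G : SimpleGraph V}
    (hG : ∀ u v, G.edist u v ≤ 2) {W : Set V} :
    IsStrongResolvingSet G W ↔ ∀ u ∉ W, ∀ v ∉ W, u ≠ v →
      G.Adj u v ∧ G.closedNeighborSet u ≠ G.closedNeighborSet v := by
  constructor
  · intro h u hu v hv huv
    obtain ⟨w, hw, hwuv⟩ := h u v huv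
    have hwu : w ≠ u := by rintro rfl; exact hu hw
    have hwv : w ≠ v := by rintro rfl; exact hv hw
    rcases hwuv with hwuv | hwuv
    · obtain ⟨hwv', hvu, hwu'⟩ := (edist_eq_add_iff_of_edist_le_two hG huv hwu hwv).mp hwuv
      refine ⟨hvu.symm, fun hN => ?_⟩
      exact (hN ▸ .inr hwv'.symm : w ∈ G.closedNeighborSet u).elim hwu fun h => hwu' h.symm
    · obtain ⟨hwu', huv', hwv'⟩ :=
        (edist_eq_add_iff_of_edist_le_two hG huv.symm hwv hwu).mp hwuv
      refine ⟨huv', fun hN => ?_⟩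
      exact (hN ▸ .inr hwu'.symm : w ∈ G.closedNeighborSet v).elim hwv fun h => hwv' h.symm
  · intro h u v huv
    by_cases hu : u ∈ W
    · exact ⟨u, hu, .inr (by rw [SimpleGraph.edist_self, zero_add])⟩
    by_cases hv : v ∈ W
    · exact ⟨v, hv, .inl (by rw [SimpleGraph.edist_self, zero_add])⟩
    -- `w ∉ W` is impossible: `w` and `b` would then have to be adjacent
    have resolve : ∀ a, ∀ b ∉ W, G.Adj a b → ∀ w ∈ G.closedNeighborSet a,
        w ∉ G.closedNeighborSet b → w ∈ W ∧ G.edist w b = G.edist w a + G.edist a b := by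
      intro a b hb hab w hwa hwb
      simp only [mem_closedNeighborSet, not_or] at hwa hwb
      have hwa' : G.Adj w a := (hwa.resolve_left fun h => hwb.2 (h ▸ hab.symm)).symm
      refine ⟨by_contra fun hw => hwb.2 ((h w hw b hb hwb.1).1.symm), ?_⟩
      exact (edist_eq_add_iff_of_edist_le_two hG hab.ne.symm hwb.1 hwa'.ne).mpr
        ⟨hwa', hab, fun h => hwb.2 h.symm⟩
    obtain ⟨hadj, hN⟩ := h u hu v hv huv
    obtain ⟨w, hw⟩ := not_forall.mp (mt Set.ext hN)
    by_cases hwu : w ∈ G.closedNeighborSet u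
    · obtain ⟨hwW, hwvu⟩ := resolve u v hv hadj w hwu fun hwv => hw (iff_of_true hwu hwv)
      exact ⟨w, hwW, .inr hwvu⟩
    · have hwv : w ∈ G.closedNeighborSet v := by_contra fun hwv => hw (iff_of_false hwu hwv)
      obtain ⟨hwW, hwuv⟩ := resolve v u hu hadj.symm w hwv hwu
      exact ⟨w, hwW, .inl hwuv⟩

section ProductOfLocalPrincipalIdealRings

open Ideal

variable {ι : Type*} {R : ι → Type*} [∀ i, CommRing (R i)] [∀ i, IsLocalRing (R i)]

noncomputable def piMaximalOnVertex (hnf : ∀ i, ¬IsField (R i)) (T : Set ι) (hT : T.Nonempty) :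
    NontrivialIdeal (Π i, R i) :=
  ⟨piMaximalOn T, piMaximalOn_ne_bot hnf hT, piMaximalOn_ne_top hT⟩

theorem piSupport_piMaximalOnVertex (hnf : ∀ i, ¬IsField (R i)) (T : Set ι) (hT : T.Nonempty) :
    (piMaximalOnVertex hnf T hT).1.piSupport = T :=
  piSupport_piMaximalOn hnf T

variable [Finite ι] [∀ i, IsPrincipalIdealRing (R i)]

theorem intersectionGraph_pi_adj_iff {u v : NontrivialIdeal (Π i, R i)} :
    (intersectionGraph (Π i, R i)).Adj u v ↔
      u ≠ v ∧ (u.1.piSupport ∩ v.1.piSupport).Nonempty := by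
  have := fun i => PreValuationRing.of_isLocalRing_of_isBezout (R i)
  exact and_congr_right' inf_ne_bot_iff_piSupport

theorem closedNeighborSet_intersectionGraph_pi (u : NontrivialIdeal (Π i, R i)) :
    (intersectionGraph (Π i, R i)).closedNeighborSet u =
      {w | (u.1.piSupport ∩ w.1.piSupport).Nonempty} := by
  ext w
  rw [mem_closedNeighborSet, intersectionGraph_pi_adj_iff, Set.mem_ofPred_eq]
  rcases eq_or_ne w u with rfl | hwu
  · simpa using piSupport_nonempty w.2.1
  · simp [hwu, hwu.symm]

theorem edist_intersectionGraph_pi_le_two [Nonempty ι] (hnf : ∀ i, ¬IsField (R i))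
    (u v : NontrivialIdeal (Π i, R i)) : (intersectionGraph (Π i, R i)).edist u v ≤ 2 := by
  refine edist_le_two_of_forall_adj (c := piMaximalOnVertex hnf Set.univ Set.univ_nonempty)
    (fun w hw => intersectionGraph_pi_adj_iff.mpr ⟨hw.symm, ?_⟩) u v
  rw [piSupport_piMaximalOnVertex, Set.univ_inter]
  exact piSupport_nonempty w.2.1

theorem closedNeighborSet_intersectionGraph_pi_eq_iff (hnf : ∀ i, ¬IsField (R i))
    {u v : NontrivialIdeal (Π i, R i)} :
    (intersectionGraph (Π i, R i)).closedNeighborSet u =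
        (intersectionGraph (Π i, R i)).closedNeighborSet v ↔
      u.1.piSupport = v.1.piSupport := by
  refine ⟨fun h => Set.ext fun i => ?_, fun h => by
    rw [closedNeighborSet_intersectionGraph_pi, closedNeighborSet_intersectionGraph_pi, h]⟩
  have := congrArg (piMaximalOnVertex hnf {i} (Set.singleton_nonempty i) ∈ ·) h
  simpa [closedNeighborSet_intersectionGraph_pi, piSupport_piMaximalOnVertex] using this

theorem isStrongResolvingSet_intersectionGraph_pi_iff [Nonempty ι] (hnf : ∀ i, ¬IsField (R i))
    {W : Set (NontrivialIdeal (Π i, R i))} :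
    IsStrongResolvingSet (intersectionGraph (Π i, R i)) W ↔ ∀ u ∉ W, ∀ v ∉ W, u ≠ v →
      (u.1.piSupport ∩ v.1.piSupport).Nonempty ∧ u.1.piSupport ≠ v.1.piSupport := by
  rw [isStrongResolvingSet_iff_of_edist_le_two (edist_intersectionGraph_pi_le_two hnf)]
  simp +contextual only [intersectionGraph_pi_adj_iff,
    closedNeighborSet_intersectionGraph_pi_eq_iff hnf, ne_eq, not_false_eq_true, true_and]

end ProductOfLocalPrincipalIdealRings

section StrongMetricDimension

open Ideal

variable {ι : Type*} [Finite ι] [Nonempty ι] {R : ι → Type*} [∀ i, CommRing (R i)]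
  [∀ i, IsLocalRing (R i)] [∀ i, IsPrincipalIdealRing (R i)]

theorem two_mul_ncard_compl_le_of_isStrongResolvingSet (hnf : ∀ i, ¬IsField (R i))
    {W : Set (NontrivialIdeal (Π i, R i))}
    (hW : IsStrongResolvingSet (intersectionGraph (Π i, R i)) W) :
    2 * Wᶜ.ncard ≤ 2 ^ Nat.card ι := by
  rw [isStrongResolvingSet_intersectionGraph_pi_iff hnf] at hW
  have hinj : Wᶜ.InjOn fun u => u.1.piSupport := fun u hu v hv h =>
    by_contra fun huv => (hW u hu v hv huv).2 h
  have hint : ((fun u => u.1.piSupport) '' Wᶜ).Intersecting := by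
    rintro _ ⟨u, hu, rfl⟩ _ ⟨v, hv, rfl⟩
    rw [Set.not_disjoint_iff_nonempty_inter]
    rcases eq_or_ne u v with rfl | huv
    · simpa using piSupport_nonempty u.2.1
    · exact (hW u hu v hv huv).1
  rw [← hinj.ncard_image, ← Nat.card_set]
  exact hint.two_mul_ncard_le

theorem exists_isStrongResolvingSet_two_mul_ncard_compl_eq (hnf : ∀ i, ¬IsField (R i)) :
    ∃ W : Set (NontrivialIdeal (Π i, R i)),
      IsStrongResolvingSet (intersectionGraph (Π i, R i)) W ∧
        2 * Wᶜ.ncard = 2 ^ Nat.card ι := by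
  obtain ⟨z⟩ := ‹Nonempty ι›
  let f : {T : Set ι | z ∈ T} → NontrivialIdeal (Π i, R i) := fun T =>
    piMaximalOnVertex hnf T ⟨z, T.2⟩
  have hf : ∀ T, (f T).1.piSupport = T := fun T => piSupport_piMaximalOnVertex hnf _ _
  have hinj : f.Injective := fun T T' h => Subtype.ext (by rw [← hf T, h, hf])
  refine ⟨(Set.range f)ᶜ, ?_, ?_⟩
  · rw [isStrongResolvingSet_intersectionGraph_pi_iff hnf]
    rintro _ hu _ hv huv
    obtain ⟨T, rfl⟩ := not_not.mp hu
    obtain ⟨T', rfl⟩ := not_not.mp hv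
    rw [hf, hf]
    exact ⟨⟨z, T.2, T'.2⟩, fun h => huv (congrArg f (Subtype.ext h))⟩
  · rw [compl_compl, Set.ncard_range_of_injective hinj, Nat.card_coe_set_eq,
      Set.two_mul_ncard_setOf_mem]

theorem isLeast_ncard_isStrongResolvingSet_intersectionGraph_pi [Finite (Ideal (Π i, R i))]
    (hnf : ∀ i, ¬IsField (R i)) :
    IsLeast {k | ∃ W : Set (NontrivialIdeal (Π i, R i)), W.Finite ∧
        IsStrongResolvingSet (intersectionGraph (Π i, R i)) W ∧ W.ncard = k}
      (Nat.card (NontrivialIdeal (Π i, R i)) - 2 ^ (Nat.card ι - 1)) := by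
  have hpow : 2 ^ Nat.card ι = 2 * 2 ^ (Nat.card ι - 1) := by
    rw [← pow_succ', Nat.sub_add_cancel Nat.card_pos]
  constructor
  · obtain ⟨W, hW, hcard⟩ := exists_isStrongResolvingSet_two_mul_ncard_compl_eq (R := R) hnf
    refine ⟨W, W.toFinite, hW, ?_⟩
    have := Set.ncard_add_ncard_compl W
    omega
  · rintro _ ⟨W, -, hW, rfl⟩
    have := two_mul_ncard_compl_le_of_isStrongResolvingSet hnf hW
    have := Set.ncard_add_ncard_compl W
    omega

end StrongMetricDimension

theorem statement13_general (m : ℕ) (hm : 2 ≤ m) (R : Fin m → Type*) [∀ i, CommRing (R i)]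
    [∀ i, IsLocalRing (R i)] [∀ i, IsPrincipalIdealRing (R i)]
    (hnf : ∀ i, ¬ IsField (R i))
    (nn : Fin m → ℕ)
    (hfin : ∀ i, {K : Ideal (R i) | K ≠ ⊥ ∧ K ≠ ⊤}.Finite)
    (hcard : ∀ i, {K : Ideal (R i) | K ≠ ⊥ ∧ K ≠ ⊤}.ncard = nn i) :
    IsLeast {k : ℕ | ∃ W : Set (NontrivialIdeal (∀ i, R i)), W.Finite ∧
        IsStrongResolvingSet (intersectionGraph (∀ i, R i)) W ∧ W.ncard = k}
      ((∏ i, (nn i + 2)) - 2 ^ (m - 1) - 2) := by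
  have : Nonempty (Fin m) := ⟨⟨0, by omega⟩⟩
  have := fun i => finite_of_finite_setOf_ne_bot_ne_top (hfin i)
  have : Finite (Ideal (Π i, R i)) := .of_equiv _ Ideal.piOrderIso.toEquiv.symm
  have : Nontrivial (Π i, R i) := Pi.nontrivial_at (⟨0, by omega⟩ : Fin m)
  have hV : Nat.card (NontrivialIdeal (Π i, R i)) + 2 = ∏ i, (nn i + 2) := by
    rw [card_nontrivialIdeal_add_two, Nat.card_congr Ideal.piOrderIso.toEquiv, Nat.card_pi]
    simp_rw [← hcard, ncard_setOf_ne_bot_ne_top_add_two]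
  convert isLeast_ncard_isStrongResolvingSet_intersectionGraph_pi (R := R) hnf using 1
  rw [Nat.card_fin]
  omega

theorem statement13 (m : ℕ) (hm : 2 ≤ m) (R : Fin m → Type*) [∀ i, CommRing (R i)]
    [∀ i, IsArtinianRing (R i)] [∀ i, IsLocalRing (R i)] [∀ i, IsPrincipalIdealRing (R i)]
    (hnf : ∀ i, ¬ IsField (R i))
    (nn : Fin m → ℕ)
    (hfin : ∀ i, {K : Ideal (R i) | K ≠ ⊥ ∧ K ≠ ⊤}.Finite)
    (hcard : ∀ i, {K : Ideal (R i) | K ≠ ⊥ ∧ K ≠ ⊤}.ncard = nn i) :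
    IsLeast {k : ℕ | ∃ W : Set (NontrivialIdeal (∀ i, R i)), W.Finite ∧
        IsStrongResolvingSet (intersectionGraph (∀ i, R i)) W ∧ W.ncard = k}
      ((∏ i, (nn i + 2)) - 2 ^ (m - 1) - 2) :=
  statement13_general m hm R hnf nn hfin hcard
end
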